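/- Let A be a commutative algebra over F and a ∈ A an element with a^k = a for some k ≥ 2 such that char(F) does not divide k−1. Then for every commutative algebra C and every algebra morphism φ : A → C[x], the image φ(a) is a constant polynomial. -/

import Mathlib

universe u v w

/-! Modulo every prime ideal of `C` the polynomial `p = φ a` still satisfies `p ^ k = p`, which
over a domain forces degree `0`; hence `p` differs from its constant term `c` by a nilpotent.
Both `p` and `c` are roots of `T ^ k - T`, whose derivative `k T ^ (k - 1) - 1` is a unit at `p`
because `p ^ (k - 1)` is idempotent and `k - 1` is invertible. Roots of a polynomial with unit
derivative that differ by a nilpotent coincide (uniqueness in Newton's method), so `p = c`. -/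

open Polynomial

theorem IsIdempotentElem.isUnit_mul_add_mul_one_sub {R : Type*} [CommRing R] {a b e : R}
    (he : IsIdempotentElem e) (ha : IsUnit a) (hb : IsUnit b) :
    IsUnit (a * e + b * (1 - e)) := by
  obtain ⟨u, rfl⟩ := ha
  obtain ⟨v, rfl⟩ := hb
  refine .of_mul_eq_one (↑u⁻¹ * e + ↑v⁻¹ * (1 - e)) ?_
  have he' : e * e = e := he
  linear_combination e ^ 2 * u.mul_inv + (1 - e) ^ 2 * v.mul_inv
    + (2 - ↑u * ↑v⁻¹ - ↑v * ↑u⁻¹) * he'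

theorem isIdempotentElem_pow_pred_of_pow_eq_self {M : Type*} [Monoid M] {x : M} {k : ℕ}
    (hk : 1 ≤ k) (hx : x ^ k = x) : IsIdempotentElem (x ^ (k - 1)) := by
  obtain ⟨m, rfl⟩ := Nat.exists_eq_add_of_le' hk
  rcases m with _ | m
  · simp [IsIdempotentElem]
  · calc x ^ (m + 1) * x ^ (m + 1) = x ^ (m + 1 + 1) * x ^ m := by
          rw [← pow_add, ← pow_add]; congr 1; omega
      _ = x ^ (m + 1) := by rw [hx, ← pow_succ']

theorem eq_of_pow_eq_self_of_isNilpotent_sub {S : Type*} [CommRing S] {x y : S} {k : ℕ}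
    (hk : 1 ≤ k) (hunit : IsUnit ((k - 1 : ℕ) : S)) (hx : x ^ k = x) (hy : y ^ k = y)
    (hxy : IsNilpotent (x - y)) : x = y := by
  have hroot : ∀ z : S, z ^ k = z → aeval z (X ^ k - X : ℤ[X]) = 0 := fun z hz => by
    simp [hz]
  have hderiv : IsUnit (aeval x (derivative (X ^ k - X : ℤ[X]))) := by
    have : aeval x (derivative (X ^ k - X : ℤ[X])) =
        ((k - 1 : ℕ) : S) * x ^ (k - 1) + (-1) * (1 - x ^ (k - 1)) := by
      simp [derivative_X_pow, Nat.cast_sub hk]; ring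
    rw [this]
    exact (isIdempotentElem_pow_pred_of_pow_eq_self hk hx).isUnit_mul_add_mul_one_sub hunit
      isUnit_one.neg
  obtain ⟨r, -, hr⟩ := existsUnique_nilpotent_sub_and_aeval_eq_zero
    (by rw [hroot x hx]; exact IsNilpotent.zero) hderiv
  exact (hr x ⟨by simp, hroot x hx⟩).trans (hr y ⟨hxy, hroot y hy⟩).symm

theorem Polynomial.natDegree_eq_zero_of_pow_eq_self {R : Type*} [Semiring R] [NoZeroDivisors R]
    {p : R[X]} {k : ℕ} (hk : 2 ≤ k) (hp : p ^ k = p) : p.natDegree = 0 := by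
  have h := natDegree_pow p k
  rw [hp] at h
  nlinarith

theorem Polynomial.isNilpotent_sub_C_coeff_zero_of_pow_eq_self {R : Type*} [CommRing R]
    {p : R[X]} {k : ℕ} (hk : 2 ≤ k) (hp : p ^ k = p) : IsNilpotent (p - C (p.coeff 0)) := by
  rw [Polynomial.isNilpotent_iff]
  rintro (_ | i)
  · simp
  rw [coeff_sub, coeff_C_succ, sub_zero, nilpotent_iff_mem_prime]
  intro J hJ
  have hdeg : (p.map (Ideal.Quotient.mk J)).natDegree = 0 :=
    natDegree_eq_zero_of_pow_eq_self hk (by rw [← Polynomial.map_pow, hp])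
  have := coeff_eq_zero_of_natDegree_lt (p := p.map (Ideal.Quotient.mk J)) (n := i + 1) (by omega)
  rwa [coeff_map, Ideal.Quotient.eq_zero_iff_mem] at this

/-- Let `A` be a commutative (possibly nonunital) algebra over a field `F` and `a ∈ A` with
`a^k = a` for some `k ≥ 2` with `char F ∤ (k−1)`.  Then for every commutative algebra `C` and
every algebra morphism `φ : A → C[x]`, the image `φ a` is a constant polynomial. -/
theorem stmt_8 {F : Type u} {A : Type v} [Field F] [NonUnitalCommRing A] [Module F A]
    [SMulCommClass F A A] [IsScalarTower F A A]
    (a : A) (k : ℕ) (hk : 2 ≤ k) (hchar : ((k - 1 : ℕ) : F) ≠ 0)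
    (ha : (Unitization.inr a : Unitization F A) ^ k = Unitization.inr a) :
    ∀ (C : Type w) [CommRing C] [Algebra F C]
      (φ : A →ₙₐ[F] Polynomial C), ∃ c : C, φ a = Polynomial.C c := by
  intro C _ _ φ
  have hp : φ a ^ k = φ a := by simpa [map_pow] using congrArg (Unitization.lift φ) ha
  have hc : (φ a).coeff 0 ^ k = (φ a).coeff 0 := by
    simpa [coeff_zero_eq_eval_zero] using congrArg (eval 0) hp
  have hunit : IsUnit ((k - 1 : ℕ) : C[X]) := by
    simpa using (isUnit_iff_ne_zero.mpr hchar).map (algebraMap F C[X])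
  exact ⟨_, eq_of_pow_eq_self_of_isNilpotent_sub (by omega) hunit hp (by rw [← C_pow, hc])
    (isNilpotent_sub_C_coeff_zero_of_pow_eq_self hk hp)⟩
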